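/- arXiv:1112.2810 — 2 statements merged into one kernel-verified Lean document; each statement's English description precedes it below -/
import Mathlib

section
/- Let c_1, …, c_m be linearly independent vectors in a vector space over the finite field F_q, let E ∈ span{c_1,…,c_m} with E ≠ 0, and let β = (β_1,…,β_m) be chosen uniformly at random from F_q^m. Then the probability that c_1 + β_1 E, …, c_m + β_m E are linearly dependent is at most 1/q. -/
/-!
Write `E = ∑ ψᵢ cᵢ` with `ψ ≠ 0`. If `∑ gᵢ (cᵢ + βᵢ E) = 0` with `g ≠ 0`, put `t = ⟨g, β⟩`; then
`∑ (gᵢ + t ψᵢ) cᵢ = 0`, so independence of the `cᵢ` forces `g = -t ψ`. Hence `t ≠ 0` and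
`t = -t ⟨ψ, β⟩`, i.e. `⟨ψ, β⟩ = -1`. As `ψ ≠ 0`, `β ↦ ⟨ψ, β⟩` is a surjective additive map, all of
whose fibres have the same size `q^m / q`.
-/

open Finset Matrix

theorem AddMonoidHom.card_fiber_mul_card_of_surjective {G M : Type*} [AddGroup G] [Fintype G]
    [AddMonoid M] [Fintype M] [DecidableEq M] (f : G →+ M) (hf : Function.Surjective f)
    (y : M) : #{g | f g = y} * Fintype.card M = Fintype.card G := by
  calc #{g | f g = y} * Fintype.card M = ∑ z, #{g | f g = z} := by
        rw [sum_congr rfl fun z _ => AddMonoidHom.card_fiber_eq_of_mem_range f (hf z) (hf y),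
          sum_const, card_univ, smul_eq_mul, mul_comm]
    _ = Fintype.card G := (card_eq_sum_card_fiberwise fun g _ => mem_univ (f g)).symm

theorem Matrix.card_dotProduct_eq_mul_card {K ι : Type*} [Field K] [Fintype K] [DecidableEq K]
    [Fintype ι] [DecidableEq ι] {ψ : ι → K} (hψ : ψ ≠ 0) (a : K) :
    #{β | ψ ⬝ᵥ β = a} * Fintype.card K = Fintype.card (ι → K) := by
  obtain ⟨i, hi⟩ := Function.ne_iff.mp hψ
  refine (AddMonoidHom.mk' (ψ ⬝ᵥ ·) (dotProduct_add ψ)).card_fiber_mul_card_of_surjective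
    (fun b => ⟨Pi.single i (b / ψ i), ?_⟩) a
  simp [dotProduct_single, mul_div_cancel₀ _ hi]

theorem LinearIndependent.dotProduct_eq_neg_one_of_not_linearIndependent_add_smul
    {K V ι : Type*} [Field K] [AddCommGroup V] [Module K V] [Fintype ι] {c : ι → V}
    (hc : LinearIndependent K c) {ψ β : ι → K} {E : V} (hE : ∑ j, ψ j • c j = E)
    (hdep : ¬ LinearIndependent K (fun i => c i + β i • E)) :
    ψ ⬝ᵥ β = -1 := by
  obtain ⟨g, hg, i, hgi⟩ := Fintype.not_linearIndependent_iff.mp hdep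
  set t := g ⬝ᵥ β
  have hcomb : ∑ j, (g + t • ψ) j • c j = 0 :=
    calc ∑ j, (g + t • ψ) j • c j = ∑ j, g j • c j + t • E := by
          simp only [← hE, Pi.add_apply, Pi.smul_apply, smul_eq_mul, add_smul, mul_smul,
            sum_add_distrib, smul_sum]
      _ = ∑ j, g j • c j + ∑ j, (g j * β j) • E := by rw [← sum_smul]; rfl
      _ = ∑ j, g j • (c j + β j • E) := by simp only [smul_add, mul_smul, sum_add_distrib]
      _ = 0 := hg
  have hg_eq : g = -(t • ψ) := eq_neg_of_add_eq_zero_left <|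
    funext <| Fintype.linearIndependent_iff.mp hc _ hcomb
  have ht : t ≠ 0 := fun h => hgi (by simp [hg_eq, h])
  have ht_eq : t = -(t * (ψ ⬝ᵥ β)) :=
    calc t = -(t • ψ) ⬝ᵥ β := by rw [← hg_eq]
      _ = -(t * (ψ ⬝ᵥ β)) := by rw [neg_dotProduct, smul_dotProduct, smul_eq_mul]
  have hfactor : t * (ψ ⬝ᵥ β + 1) = 0 := by linear_combination ht_eq
  exact eq_neg_of_add_eq_zero_left ((mul_eq_zero.mp hfactor).resolve_left ht)

open scoped Classical

theorem stmt9 {F V : Type*} [Field F] [Fintype F] [AddCommGroup V] [Module F V]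
    {m : ℕ} (c : Fin m → V) (hc : LinearIndependent F c)
    (E : V) (hE : E ∈ Submodule.span F (Set.range c)) (hE0 : E ≠ 0) :
    ((Finset.univ.filter
        (fun β : Fin m → F => ¬ LinearIndependent F (fun i => c i + β i • E))).card : ℚ)
      / (Fintype.card (Fin m → F) : ℚ) ≤ 1 / (Fintype.card F : ℚ) := by
  obtain ⟨ψ, hψE⟩ := (Submodule.mem_span_range_iff_exists_fun F).mp hE
  have hψ : ψ ≠ 0 := by
    rintro rfl
    exact hE0 (by simp [← hψE])
  have hbad : #{β : Fin m → F | ¬ LinearIndependent F (fun i => c i + β i • E)} ≤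
      #{β | ψ ⬝ᵥ β = -1} :=
    card_le_card <| monotone_filter_right _ fun _ _ =>
      hc.dotProduct_eq_neg_one_of_not_linearIndependent_add_smul hψE
  have hq : (0 : ℚ) < Fintype.card F := by exact_mod_cast Fintype.card_pos
  rw [div_le_div_iff₀ (by positivity) hq, ← card_dotProduct_eq_mul_card hψ (-1)]
  push_cast
  rw [one_mul]
  exact mul_le_mul_of_nonneg_right (mod_cast hbad) hq.le
end

section
/- Let A, B be finite-dimensional subspaces of a vector space over a field, c_1, …, c_m a spanning set of B, E a vector with E ∉ A + B, and β_1, …, β_m scalars. Let B' = span{c_i + β_i E : i ∈ [m]}. Then dim(A ∩ B') ≤ dim(A ∩ B). -/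
theorem stmt14 {K V : Type*} [Field K] [AddCommGroup V] [Module K V]
    (A B : Submodule K V) [FiniteDimensional K ↥A]
    {m : ℕ} (c : Fin m → V) (hc : Submodule.span K (Set.range c) = B)
    (E : V) (hE : E ∉ A ⊔ B) (β : Fin m → K) :
    Module.finrank K ↥(A ⊓ Submodule.span K (Set.range (fun i => c i + β i • E)))
      ≤ Module.finrank K ↥(A ⊓ B) := by
  have hle : A ⊓ Submodule.span K (Set.range (fun i => c i + β i • E)) ≤ A ⊓ B := by
    rintro x ⟨hxA, hxS⟩
    refine ⟨hxA, ?_⟩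
    have hsub : Submodule.span K (Set.range (fun i => c i + β i • E)) ≤
        B ⊔ Submodule.span K {E} := by
      rw [Submodule.span_le]
      rintro _ ⟨i, rfl⟩
      refine Submodule.add_mem _ (Submodule.mem_sup_left ?_)
        (Submodule.mem_sup_right (Submodule.smul_mem _ _ (Submodule.mem_span_singleton_self E)))
      exact hc ▸ Submodule.subset_span (Set.mem_range_self i)
    obtain ⟨b, hb, y, hy, hxy⟩ := Submodule.mem_sup.mp (hsub hxS)
    obtain ⟨t, rfl⟩ := Submodule.mem_span_singleton.mp hy
    by_cases ht : t = 0
    · rw [← hxy, ht, zero_smul, add_zero]; exact hb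
    · exfalso
      apply hE
      have hEe : E = t⁻¹ • (x - b) := by
        rw [← hxy]
        rw [add_sub_cancel_left, smul_smul, inv_mul_cancel₀ ht, one_smul]
      rw [hEe]
      exact Submodule.smul_mem _ _
        (Submodule.sub_mem _ (Submodule.mem_sup_left hxA) (Submodule.mem_sup_right hb))
  haveI : FiniteDimensional K ↥(A ⊓ B) :=
    Submodule.finiteDimensional_of_le (inf_le_left : A ⊓ B ≤ A)
  exact Submodule.finrank_mono hle
end
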